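/- Under the hypotheses that (ξ_n) is an orthonormal family in H_I, r_n ∈ ℂ, θ ↦ φ_n(θ) ∈ H_S are differentiable, N(θ) := 1 − Σ_n |r_n|²‖φ_n(θ)‖² with 0 ≤ N(θ) < 1, and Φ(θ) := (1−N(θ))^{−1/2} Σ_n r_n φ_n(θ) ⊗ ξ_n is norm-convergent and differentiable term by term, the following trace identity holds: Σ_n |r_n|² ⟨φ_n(θ), ∂_θφ_n(θ)⟩ = (1 − N(θ)) ⟨Φ(θ), ∂_θΦ(θ)⟩ − (∂_θN(θ))/2. -/

import Mathlib

/-!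
Orthonormality of `(ξₙ)` collapses the inner product of `S = Σ rₙ φₙ ⊗ ξₙ` with any
`Σ rₙ ψₙ ⊗ ξₙ` to `Σ |rₙ|² ⟨φₙ, ψₙ⟩`. Hence the trace is `⟨S, ∂S⟩` and `‖S‖² = 1 - N`.
Differentiating `Φ = (1 - N)^{-1/2} S`, the derivative of the prefactor contributes exactly
`∂N / 2` to `(1 - N) ⟨Φ, ∂Φ⟩`, because `⟨S, S⟩ = 1 - N`.
-/

open ComplexConjugate

section Tensor

variable {𝕜 ι H_S H_I E : Type*} [RCLike 𝕜]
  [NormedAddCommGroup H_S] [InnerProductSpace 𝕜 H_S]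
  [NormedAddCommGroup H_I] [InnerProductSpace 𝕜 H_I]
  [NormedAddCommGroup E] [InnerProductSpace 𝕜 E]
  {tens : H_S → H_I → E}
  {ξ : ι → H_I} {r : ι → 𝕜} {a : ι → H_S} {S : E}

theorem inner_tensor_eq_of_hasSum_orthonormal
    (htens : ∀ a b c d, inner 𝕜 (tens a b) (tens c d) = inner 𝕜 a c * inner 𝕜 b d)
    (hξ : Orthonormal 𝕜 ξ) (hS : HasSum (fun m => r m • tens (a m) (ξ m)) S)
    (b : H_S) (n : ι) :
    inner 𝕜 S (tens b (ξ n)) = conj (r n) * inner 𝕜 (a n) b := by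
  have hterm : ∀ m ≠ n, inner 𝕜 (r m • tens (a m) (ξ m)) (tens b (ξ n)) = 0 := fun m hm => by
    rw [inner_smul_left, htens, hξ.inner_eq_zero hm, mul_zero, mul_zero]
  have hsum := (hS.mapL (innerSLFlip 𝕜 (tens b (ξ n)))).unique (hasSum_single n hterm)
  rwa [innerSLFlip_apply_apply, inner_smul_left, htens, inner_self_eq_norm_sq_to_K, hξ.1 n,
    RCLike.ofReal_one, one_pow, mul_one] at hsum

theorem hasSum_inner_of_hasSum_orthonormal
    (htens : ∀ a b c d, inner 𝕜 (tens a b) (tens c d) = inner 𝕜 a c * inner 𝕜 b d)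
    (hξ : Orthonormal 𝕜 ξ) (hS : HasSum (fun m => r m • tens (a m) (ξ m)) S)
    {b : ι → H_S} {T : E} (hT : HasSum (fun m => r m • tens (b m) (ξ m)) T) :
    HasSum (fun n => ((‖r n‖ ^ 2 : ℝ) : 𝕜) * inner 𝕜 (a n) (b n)) (inner 𝕜 S T) := by
  have hterm : ∀ n, inner 𝕜 S (r n • tens (b n) (ξ n)) = ‖r n‖ ^ 2 * inner 𝕜 (a n) (b n) :=
    fun n => by
      rw [inner_smul_right, inner_tensor_eq_of_hasSum_orthonormal htens hξ hS, ← mul_assoc,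
        RCLike.mul_conj]
  simpa only [innerSL_apply_apply, hterm, RCLike.ofReal_pow] using hT.mapL (innerSL 𝕜 S)

theorem hasSum_norm_sq_of_hasSum_orthonormal
    (htens : ∀ a b c d, inner 𝕜 (tens a b) (tens c d) = inner 𝕜 a c * inner 𝕜 b d)
    (hξ : Orthonormal 𝕜 ξ) (hS : HasSum (fun m => r m • tens (a m) (ξ m)) S) :
    HasSum (fun n => ‖r n‖ ^ 2 * ‖a n‖ ^ 2) (‖S‖ ^ 2) := by
  simpa only [RCLike.reCLM_apply, RCLike.re_ofReal_mul, inner_self_eq_norm_sq] using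
    (hasSum_inner_of_hasSum_orthonormal htens hξ hS hS).mapL RCLike.reCLM

end Tensor

theorem HasDerivAt.inv_sqrt {q : ℝ → ℝ} {q' x : ℝ} (hq : HasDerivAt q q' x) (hx : 0 < q x) :
    HasDerivAt (fun t => (√(q t))⁻¹) (-q' / (2 * √(q x) ^ 3)) x := by
  have hs : 0 < √(q x) := Real.sqrt_pos.mpr hx
  refine ((hq.sqrt hx.ne').inv hs.ne').congr_deriv ?_
  field_simp

theorem exists_hasDerivAt_inv_sqrt_smul_inner {E : Type*} [NormedAddCommGroup E]
    [InnerProductSpace ℂ E] {q : ℝ → ℝ} {q' x : ℝ} {S : ℝ → E} {D : E}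
    (hq : HasDerivAt q q' x) (hx : 0 < q x) (hS : HasDerivAt S D x) (hSq : ‖S x‖ ^ 2 = q x) :
    ∃ Φd : E, HasDerivAt (fun t => ((√(q t) : ℝ) : ℂ)⁻¹ • S t) Φd x ∧
      (q x : ℂ) * inner ℂ (((√(q x) : ℝ) : ℂ)⁻¹ • S x) Φd = inner ℂ (S x) D - q' / 2 := by
  set s := √(q x)
  have hs : (s : ℂ) ≠ 0 := by exact_mod_cast (Real.sqrt_pos.mpr hx).ne'
  have hqs : (q x : ℂ) = s ^ 2 := by exact_mod_cast (Real.sq_sqrt hx.le).symm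
  have hSS : inner ℂ (S x) (S x) = (s : ℂ) ^ 2 := by
    rw [inner_self_eq_norm_sq_to_K, ← hqs, ← hSq]
    norm_cast
  refine ⟨(s : ℂ)⁻¹ • D + ((-q' / (2 * s ^ 3) : ℝ) : ℂ) • S x, ?_, ?_⟩
  · simpa only [Complex.ofReal_inv] using (hq.inv_sqrt hx).ofReal_comp.fun_smul hS
  · rw [inner_smul_left, inner_add_right, inner_smul_right, inner_smul_right, hSS, hqs,
      map_inv₀, Complex.conj_ofReal]
    push_cast
    field_simp
    ring

theorem trace_X_identity_general
    {H_S H_I E : Type*}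
    [NormedAddCommGroup H_S] [InnerProductSpace ℂ H_S]
    [NormedAddCommGroup H_I] [InnerProductSpace ℂ H_I]
    [NormedAddCommGroup E] [InnerProductSpace ℂ E]
    (tens : H_S →ₗ[ℂ] H_I →ₗ[ℂ] E)
    (htens : ∀ (a : H_S) (b : H_I) (c : H_S) (d : H_I),
      (inner ℂ (tens a b) (tens c d) : ℂ) = (inner ℂ a c : ℂ) * (inner ℂ b d : ℂ))
    (ξ : ℕ → H_I) (hξ : Orthonormal ℂ ξ)
    (r : ℕ → ℂ) (φ φd : ℕ → ℝ → H_S)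
    (N : ℝ → ℝ) (hN : ∀ t, N t = 1 - ∑' n, ‖r n‖ ^ 2 * ‖φ n t‖ ^ 2)
    (θ : ℝ) (hN1 : N θ < 1)
    (N' : ℝ) (hN' : HasDerivAt N N' θ)
    (S D : ℝ → E)
    (hS : ∀ t, HasSum (fun n => r n • tens (φ n t) (ξ n)) (S t))
    (hD : ∀ t, HasSum (fun n => r n • tens (φd n t) (ξ n)) (D t))
    (hSD : ∀ t, HasDerivAt S (D t) t)
    (Φ : ℝ → E) (hΦ : ∀ t, Φ t = ((Real.sqrt (1 - N t) : ℝ) : ℂ)⁻¹ • S t) :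
    ∃ Φd : E, HasDerivAt Φ Φd θ ∧
      ∑' n, ((‖r n‖ ^ 2 : ℝ) : ℂ) * (inner ℂ (φ n θ) (φd n θ) : ℂ) =
        ((1 - N θ : ℝ) : ℂ) * (inner ℂ (Φ θ) Φd : ℂ) - (N' : ℂ) / 2 := by
  have hnorm : ‖S θ‖ ^ 2 = 1 - N θ := by
    rw [hN θ, (hasSum_norm_sq_of_hasSum_orthonormal htens hξ (hS θ)).tsum_eq, sub_sub_cancel]
  have htrace : ∑' n, ((‖r n‖ ^ 2 : ℝ) : ℂ) * inner ℂ (φ n θ) (φd n θ) = inner ℂ (S θ) (D θ) :=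
    (hasSum_inner_of_hasSum_orthonormal htens hξ (hS θ) (hD θ)).tsum_eq
  obtain ⟨Φd, hΦd, hinner⟩ := exists_hasDerivAt_inv_sqrt_smul_inner (hN'.const_sub 1)
    (sub_pos.mpr hN1) (hSD θ) hnorm
  refine ⟨Φd, by rwa [funext hΦ], ?_⟩
  rw [htrace, hΦ θ, hinner]
  push_cast
  ring

/-- (Trace identity `Tr X = (1-N)⟨Φ, ∂Φ⟩ - ∂N/2`, Appendix C.) For
`Φ(θ) = (1-N(θ))^{-1/2} Σₙ rₙ φₙ(θ) ⊗ ξₙ` with `(ξₙ)` orthonormal and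
`N(θ) = 1 - Σₙ |rₙ|²‖φₙ(θ)‖²`, one has
`Σₙ |rₙ|²⟨φₙ, ∂φₙ⟩ = (1-N)⟨Φ, ∂Φ⟩ - (∂N)/2`. -/
theorem trace_X_identity
    {H_S H_I E : Type*}
    [NormedAddCommGroup H_S] [InnerProductSpace ℂ H_S]
    [NormedAddCommGroup H_I] [InnerProductSpace ℂ H_I]
    [NormedAddCommGroup E] [InnerProductSpace ℂ E]
    (tens : H_S →ₗ[ℂ] H_I →ₗ[ℂ] E)
    (htens : ∀ (a : H_S) (b : H_I) (c : H_S) (d : H_I),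
      (inner ℂ (tens a b) (tens c d) : ℂ) = (inner ℂ a c : ℂ) * (inner ℂ b d : ℂ))
    (ξ : ℕ → H_I) (hξ : Orthonormal ℂ ξ)
    (r : ℕ → ℂ) (φ φd : ℕ → ℝ → H_S)
    (hφ : ∀ n t, HasDerivAt (φ n) (φd n t) t)
    (hsum : ∀ t, Summable fun n => ‖r n‖ ^ 2 * ‖φ n t‖ ^ 2)
    (N : ℝ → ℝ) (hN : ∀ t, N t = 1 - ∑' n, ‖r n‖ ^ 2 * ‖φ n t‖ ^ 2)
    (θ : ℝ) (hN0 : 0 ≤ N θ) (hN1 : N θ < 1)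
    (N' : ℝ) (hN' : HasDerivAt N N' θ)
    (S D : ℝ → E)
    (hS : ∀ t, HasSum (fun n => r n • tens (φ n t) (ξ n)) (S t))
    (hD : ∀ t, HasSum (fun n => r n • tens (φd n t) (ξ n)) (D t))
    (hSD : ∀ t, HasDerivAt S (D t) t)
    (Φ : ℝ → E) (hΦ : ∀ t, Φ t = ((Real.sqrt (1 - N t) : ℝ) : ℂ)⁻¹ • S t) :
    ∃ Φd : E, HasDerivAt Φ Φd θ ∧
      ∑' n, ((‖r n‖ ^ 2 : ℝ) : ℂ) * (inner ℂ (φ n θ) (φd n θ) : ℂ) =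
        ((1 - N θ : ℝ) : ℂ) * (inner ℂ (Φ θ) Φd : ℂ) - (N' : ℂ) / 2 :=
  trace_X_identity_general tens htens ξ hξ r φ φd N hN θ hN1 N' hN' S D hS hD hSD Φ hΦ
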